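/- Let u, v be positive integers and a, c natural numbers not both zero, and let α_n, γ_n be as defined. Then for every natural number n, γ_n ≥ α_n; moreover, in ℝ, with p₊ = v√u + √(v(4+uv)), p₋ = −v√u + √(v(4+uv)), q₊ = 2 + uv + √(uv(4+uv)) and q₋ = 2 + uv − √(uv(4+uv)), one has γ_n = ((c·p₊ + a·q₊·√u)·(q₊)^n + (c·p₋ − a·q₋·√u)·(q₋)^n) / (2^{n+1}·√(v(4+uv))) and α_n = ((c·p₊ + a·q₊·√u)·(q₊)^n·p₋ − (c·p₋ − a·q₋·√u)·(q₋)^n·p₊) / (2^{n+2}·√(uv(4+uv))). -/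

import Mathlib

/-!
The recurrence is `x ↦ M x` for `M = !![1, v; u, 1 + u v]`, which has trace `2 + u v` and
determinant `1`, hence eigenvalues `q₊ / 2` and `q₋ / 2`. With `r = √u` and
`s = √(v (4 + u v))`, the eigenvectors are `(p₋, 2 r)` and `(p₊, -2 r)` (the second is the
first with `r` replaced by `-r`); expanding `(a, u a + c)` in this basis gives both closed
forms. The inequality `α_n ≤ γ_n` is immediate from `u ≥ 1`.
-/

/-- The pair (α_n, γ_n) defined by α_0 = a, γ_0 = u·a + c, and
    α_n = α_{n-1} + v·γ_{n-1}, γ_n = u·α_{n-1} + (1+uv)·γ_{n-1}. -/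
def ag (u v a c : ℕ) : ℕ → ℕ × ℕ
  | 0 => (a, u * a + c)
  | n + 1 =>
      ((ag u v a c n).1 + v * (ag u v a c n).2,
       u * (ag u v a c n).1 + (1 + u * v) * (ag u v a c n).2)

theorem ag_fst_le_snd {u : ℕ} (v a c : ℕ) (hu : 1 ≤ u) (n : ℕ) :
    (ag u v a c n).1 ≤ (ag u v a c n).2 := by
  cases n with
  | zero => exact le_add_right (Nat.le_mul_of_pos_left a hu)
  | succ n =>
    simp only [ag]
    nlinarith [Nat.zero_le (ag u v a c n).1, Nat.zero_le (v * (ag u v a c n).2)]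

def agStep (u v : ℝ) : Module.End ℝ (ℝ × ℝ) :=
  (LinearMap.fst ℝ ℝ ℝ + v • LinearMap.snd ℝ ℝ ℝ).prod
    (u • LinearMap.fst ℝ ℝ ℝ + (1 + u * v) • LinearMap.snd ℝ ℝ ℝ)

@[simp]
theorem agStep_apply (u v : ℝ) (x : ℝ × ℝ) :
    agStep u v x = (x.1 + v * x.2, u * x.1 + (1 + u * v) * x.2) := rfl

theorem ag_cast_eq_agStep_pow (u v a c n : ℕ) :
    (((ag u v a c n).1 : ℝ), ((ag u v a c n).2 : ℝ)) = (agStep u v ^ n) (a, u * a + c) := by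
  induction n with
  | zero => simp [ag]
  | succ n ih => rw [pow_succ', Module.End.mul_apply, ← ih]; simp [ag]

section ClosedForm

variable {u v r s : ℝ}

theorem agStep_hasEigenvector (hr : r ^ 2 = u) (hs : s ^ 2 = v * (4 + u * v)) (hr0 : r ≠ 0) :
    (agStep u v).HasEigenvector ((2 + u * v + r * s) / 2) (-(v * r) + s, 2 * r) := by
  refine ⟨Module.End.mem_eigenspace_iff.mpr ?_, by simp [hr0]⟩
  rw [agStep_apply, Prod.smul_mk, Prod.mk.injEq]
  constructor
  · linear_combination (v * s / 2) * hr - (r / 2) * hs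
  · linear_combination (-s) * hr

theorem initial_eq_eigenvector_combination (hr : r ^ 2 = u) (hr0 : r ≠ 0) (hs0 : s ≠ 0)
    (a c : ℝ) :
    (a, u * a + c) =
      ((c * (v * r + s) + a * (2 + u * v + r * s) * r) / (4 * r * s)) • (-(v * r) + s, 2 * r) -
      ((c * (-(v * r) + s) - a * (2 + u * v - r * s) * r) / (4 * r * s)) •
        (v * r + s, -(2 * r)) := by
  simp only [Prod.smul_mk, smul_eq_mul, Prod.mk_sub_mk, Prod.mk.injEq]
  constructor <;> field_simp
  · linear_combination (2 * a * r * s * v) * hr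
  · linear_combination (-4 * a * s) * hr

theorem agStep_pow_apply (hr : r ^ 2 = u) (hs : s ^ 2 = v * (4 + u * v)) (hr0 : r ≠ 0)
    (hs0 : s ≠ 0) (a c : ℝ) (n : ℕ) :
    (agStep u v ^ n) (a, u * a + c) =
      (((c * (v * r + s) + a * (2 + u * v + r * s) * r) * (2 + u * v + r * s) ^ n *
            (-(v * r) + s) -
          (c * (-(v * r) + s) - a * (2 + u * v - r * s) * r) * (2 + u * v - r * s) ^ n *
            (v * r + s)) / (2 ^ (n + 2) * (r * s)),
        ((c * (v * r + s) + a * (2 + u * v + r * s) * r) * (2 + u * v + r * s) ^ n +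
          (c * (-(v * r) + s) - a * (2 + u * v - r * s) * r) * (2 + u * v - r * s) ^ n) /
            (2 ^ (n + 1) * s)) := by
  have hplus := agStep_hasEigenvector hr hs hr0
  have hminus : (agStep u v).HasEigenvector ((2 + u * v - r * s) / 2) (v * r + s, -(2 * r)) := by
    simpa [sub_eq_add_neg] using
      agStep_hasEigenvector (r := -r) (by rw [neg_sq, hr]) hs (neg_ne_zero.mpr hr0)
  rw [initial_eq_eigenvector_combination hr hr0 hs0, map_sub, map_smul, map_smul,
    hplus.pow_apply, hminus.pow_apply]
  simp only [Prod.smul_mk, smul_eq_mul, Prod.mk_sub_mk, Prod.mk.injEq, div_pow]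
  constructor <;> field_simp <;> ring

end ClosedForm

theorem stmt5_general (u v a c : ℕ) (hu : 1 ≤ u) (hv : 1 ≤ v)
    (pp pm qp qm : ℝ)
    (hpp : pp = (v : ℝ) * Real.sqrt u + Real.sqrt ((v : ℝ) * (4 + (u : ℝ) * v)))
    (hpm : pm = -((v : ℝ) * Real.sqrt u) + Real.sqrt ((v : ℝ) * (4 + (u : ℝ) * v)))
    (hqp : qp = 2 + (u : ℝ) * v + Real.sqrt ((u : ℝ) * v * (4 + (u : ℝ) * v)))
    (hqm : qm = 2 + (u : ℝ) * v - Real.sqrt ((u : ℝ) * v * (4 + (u : ℝ) * v)))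
    (n : ℕ) :
    (ag u v a c n).1 ≤ (ag u v a c n).2 ∧
    ((ag u v a c n).2 : ℝ) =
      (((c : ℝ) * pp + (a : ℝ) * qp * Real.sqrt u) * qp ^ n +
        ((c : ℝ) * pm - (a : ℝ) * qm * Real.sqrt u) * qm ^ n) /
        (2 ^ (n + 1) * Real.sqrt ((v : ℝ) * (4 + (u : ℝ) * v))) ∧
    ((ag u v a c n).1 : ℝ) =
      (((c : ℝ) * pp + (a : ℝ) * qp * Real.sqrt u) * qp ^ n * pm -
        ((c : ℝ) * pm - (a : ℝ) * qm * Real.sqrt u) * qm ^ n * pp) /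
        (2 ^ (n + 2) * Real.sqrt ((u : ℝ) * v * (4 + (u : ℝ) * v))) := by
  have hrs : √((u : ℝ) * v * (4 + u * v)) = √(u : ℝ) * √((v : ℝ) * (4 + u * v)) := by
    rw [mul_assoc, Real.sqrt_mul (Nat.cast_nonneg u)]
  have hclosed := (ag_cast_eq_agStep_pow u v a c n).trans <|
    agStep_pow_apply (Real.sq_sqrt (Nat.cast_nonneg u)) (Real.sq_sqrt (by positivity))
      (by positivity) (by positivity) a c n
  rw [Prod.mk.injEq] at hclosed
  subst hpp hpm hqp hqm
  rw [hrs]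
  exact ⟨ag_fst_le_snd v a c hu n, hclosed.2, hclosed.1⟩

theorem stmt5 (u v a c : ℕ) (hu : 1 ≤ u) (hv : 1 ≤ v) (hac : ¬(a = 0 ∧ c = 0))
    (pp pm qp qm : ℝ)
    (hpp : pp = (v : ℝ) * Real.sqrt u + Real.sqrt ((v : ℝ) * (4 + (u : ℝ) * v)))
    (hpm : pm = -((v : ℝ) * Real.sqrt u) + Real.sqrt ((v : ℝ) * (4 + (u : ℝ) * v)))
    (hqp : qp = 2 + (u : ℝ) * v + Real.sqrt ((u : ℝ) * v * (4 + (u : ℝ) * v)))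
    (hqm : qm = 2 + (u : ℝ) * v - Real.sqrt ((u : ℝ) * v * (4 + (u : ℝ) * v)))
    (n : ℕ) :
    (ag u v a c n).1 ≤ (ag u v a c n).2 ∧
    ((ag u v a c n).2 : ℝ) =
      (((c : ℝ) * pp + (a : ℝ) * qp * Real.sqrt u) * qp ^ n +
        ((c : ℝ) * pm - (a : ℝ) * qm * Real.sqrt u) * qm ^ n) /
        (2 ^ (n + 1) * Real.sqrt ((v : ℝ) * (4 + (u : ℝ) * v))) ∧
    ((ag u v a c n).1 : ℝ) =
      (((c : ℝ) * pp + (a : ℝ) * qp * Real.sqrt u) * qp ^ n * pm -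
        ((c : ℝ) * pm - (a : ℝ) * qm * Real.sqrt u) * qm ^ n * pp) /
        (2 ^ (n + 2) * Real.sqrt ((u : ℝ) * v * (4 + (u : ℝ) * v))) :=
  stmt5_general u v a c hu hv pp pm qp qm hpp hpm hqp hqm n
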